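/- If a group G contains elements x₀, x₁, …, xₙ such that x_{i+1} x_i x_{i+1}⁻¹ = x_i⁻¹ for all i (indices modulo n+1), with each pair ⟨x_i, x_{i+1}⟩ generating a subgroup isomorphic to the Klein bottle group, then G is not left-orderable. -/
import Mathlib


/-- The single relator `a b a⁻¹ b` of the Klein bottle group `⟨a, b ∣ a b a⁻¹ = b⁻¹⟩`,
with `a = FreeGroup.of 0` and `b = FreeGroup.of 1`. -/
def kleinRels : Set (FreeGroup (Fin 2)) :=
  {FreeGroup.of 0 * FreeGroup.of 1 * (FreeGroup.of 0)⁻¹ * FreeGroup.of 1}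

/-- The Klein bottle group `K = ⟨a, b ∣ a b a⁻¹ = b⁻¹⟩`. -/
abbrev KleinGroup : Type := PresentedGroup kleinRels

/-- The generator `a` of the Klein bottle group. -/
def Ka : KleinGroup := PresentedGroup.of 0

/-- The generator `b` of the Klein bottle group. -/
def Kb : KleinGroup := PresentedGroup.of 1


/-- A group is left-orderable if it admits a total order invariant under left
multiplication. -/
def LeftOrderable (G : Type*) [Group G] : Prop :=
  ∃ r : G → G → Prop, IsStrictTotalOrder G r ∧ ∀ g x y : G, r x y → r (g * x) (g * y)

/- ### Auxiliary material -/

section Aux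

variable {G : Type*} [Group G]

/-- From the Klein relation, conjugation by `a` sends `b⁻¹` to `b`. -/
lemma klein_aux1 {a b : G} (h : a * b * a⁻¹ = b⁻¹) : a * b⁻¹ * a⁻¹ = b := by
  have := congrArg Inv.inv h
  simpa [mul_inv_rev, mul_assoc] using this

/-- From the Klein relation, conjugation by `a⁻¹` also inverts `b`. -/
lemma klein_aux2 {a b : G} (h : a * b * a⁻¹ = b⁻¹) : a⁻¹ * b * a = b⁻¹ := by
  have h1 : a⁻¹ * (a * b * a⁻¹) * a = a⁻¹ * b⁻¹ * a := by rw [h]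
  have h2 : b = a⁻¹ * b⁻¹ * a := by simpa [mul_assoc] using h1
  have := congrArg Inv.inv h2
  simpa [mul_inv_rev, mul_assoc] using this.symm

/-- The Klein relation holds for all sign choices of the two letters. -/
lemma klein_signs {a b A B : G} (h : a * b * a⁻¹ = b⁻¹)
    (hA : A = a ∨ A = a⁻¹) (hB : B = b ∨ B = b⁻¹) : A * B * A⁻¹ = B⁻¹ := by
  rcases hA with rfl | rfl <;> rcases hB with rfl | rfl
  · exact h
  · rw [inv_inv]; exact klein_aux1 h
  · rw [inv_inv]; exact klein_aux2 h
  · have h2 : a⁻¹ * b * (a⁻¹)⁻¹ = b⁻¹ := by rw [inv_inv]; exact klein_aux2 h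
    simpa [inv_inv] using klein_aux1 h2

end Aux

/-- An image `(0 1)` of the generator `a` in `S₃`. -/
def permA : Equiv.Perm (Fin 3) := Equiv.swap 0 1

/-- An image (a 3-cycle) of the generator `b` in `S₃`. -/
def permB : Equiv.Perm (Fin 3) := Equiv.swap 0 1 * Equiv.swap 1 2

lemma perm_rels : ∀ re ∈ kleinRels,
    FreeGroup.lift (fun i : Fin 2 => if i = 0 then permA else permB) re = 1 := by
  intro re hre
  simp only [kleinRels, Set.mem_singleton_iff] at hre
  subst hre
  simp only [map_mul, map_inv, FreeGroup.lift_apply_of]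
  norm_num
  decide

/-- The homomorphism `K → S₃` sending `a ↦ (0 1)`, `b ↦ (0 1 2)`. -/
def kleinHom : KleinGroup →* Equiv.Perm (Fin 3) := PresentedGroup.toGroup perm_rels

lemma kleinHom_Ka : kleinHom Ka = permA := by
  simp [kleinHom, Ka, PresentedGroup.toGroup.of]

lemma kleinHom_Kb : kleinHom Kb = permB := by
  simp [kleinHom, Kb, PresentedGroup.toGroup.of]

/-- The Klein bottle group is not abelian. -/
lemma klein_nonabelian : Ka * Kb ≠ Kb * Ka := by
  intro h
  have := congrArg kleinHom h
  rw [map_mul, map_mul, kleinHom_Ka, kleinHom_Kb] at this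
  revert this
  decide

/-- If a group `G` contains elements `x₀, …, xₙ` with `x_{i+1} x_i x_{i+1}⁻¹ = x_i⁻¹` for
all `i` (indices mod `n+1`), each pair `⟨x_i, x_{i+1}⟩` generating a subgroup isomorphic
to the Klein bottle group, then `G` is not left-orderable. -/
theorem not_leftOrderable_of_klein_cycle (G : Type*) [Group G] (n : ℕ)
    (x : ZMod (n + 1) → G)
    (hrel : ∀ i : ZMod (n + 1), x (i + 1) * x i * (x (i + 1))⁻¹ = (x i)⁻¹)
    (hklein : ∀ i : ZMod (n + 1),
      Nonempty (↥(Subgroup.closure {x i, x (i + 1)}) ≃* KleinGroup)) :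
    ¬ LeftOrderable G := by
  rintro ⟨r, hto, hinv⟩
  haveI := hto
  -- Each `x i` is nontrivial, since otherwise `⟨x i, x (i+1)⟩` would be abelian.
  have hx : ∀ i, x i ≠ 1 := by
    intro i hi
    obtain ⟨e⟩ := hklein i
    have hsub : Subgroup.closure {x i, x (i + 1)} ≤ Subgroup.closure {x (i + 1)} := by
      rw [Subgroup.closure_le]
      intro g hg
      rcases hg with hg | hg
      · rw [hg, hi]; exact one_mem _
      · rw [Set.mem_singleton_iff] at hg
        rw [hg]; exact Subgroup.subset_closure rfl
    have hcomm : ∀ p q : Subgroup.closure {x i, x (i + 1)}, p * q = q * p := by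
      intro p q
      obtain ⟨m, hm⟩ := Subgroup.mem_closure_singleton.mp (hsub p.2)
      obtain ⟨k, hk⟩ := Subgroup.mem_closure_singleton.mp (hsub q.2)
      have : (p : G) * q = (q : G) * p := by
        rw [← hm, ← hk, ← zpow_add, ← zpow_add, add_comm m k]
      exact Subtype.ext (by simpa using this)
    apply klein_nonabelian
    have h1 := hcomm (e.symm Ka) (e.symm Kb)
    have h2 := congrArg e h1
    simpa [map_mul] using h2
  -- positive representatives
  have hPex : ∀ i, ∃ P : G, (P = x i ∨ P = (x i)⁻¹) ∧ r 1 P := by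
    intro i
    rcases trichotomous_of r 1 (x i) with h | h | h
    · exact ⟨x i, Or.inl rfl, h⟩
    · exact absurd h.symm (hx i)
    · refine ⟨(x i)⁻¹, Or.inr rfl, ?_⟩
      have := hinv (x i)⁻¹ _ _ h
      simpa using this
  choose P hP1 hP2 using hPex
  -- key step: the positive representative strictly grows along the cycle
  have chain : ∀ i, r (P i) (P (i + 1)) := by
    intro i
    set A := P (i + 1)
    set B := P i
    have hABA : A * B * A⁻¹ = B⁻¹ := klein_signs (hrel i) (hP1 (i + 1)) (hP1 i)
    have hA : r 1 A := hP2 (i + 1)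
    have hB : r 1 B := hP2 i
    -- A * B is positive
    have h1 : r A (A * B) := by
      have := hinv A _ _ hB
      simpa using this
    have h2 : r 1 (A * B) := trans_of r hA h1
    -- A * B = B⁻¹ * A
    have h3 : A * B = B⁻¹ * A := by rw [← hABA]; group
    rw [h3] at h2
    have h4 := hinv B _ _ h2
    simpa [mul_assoc] using h4
  -- go around the cycle
  have hchain : ∀ k : ℕ, r (P 0) (P ((k + 1 : ℕ) : ZMod (n + 1))) := by
    intro k
    induction k with
    | zero => simpa using chain 0
    | succ k ih =>
      refine trans_of r ih ?_
      have := chain ((k + 1 : ℕ) : ZMod (n + 1))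
      have hc : (((k + 1 : ℕ) : ZMod (n + 1)) + 1) = ((k + 1 + 1 : ℕ) : ZMod (n + 1)) := by
        push_cast; ring
      rwa [hc] at this
  have hfin := hchain n
  rw [ZMod.natCast_self] at hfin
  exact irrefl_of r (P 0) hfin
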